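/- Ville/Doob maximal inequality for betting strategies: if d : List Bool → ℝ≥0 satisfies d(σ0) + d(σ1) = 2·d(σ), then for every λ > 0, the fair-coin product measure of the set of sequences x such that d(x|_N) ≥ λ for some N is at most d([])/λ. -/

import Mathlib

/-!
Every sequence in the event passes through a first string `σ` with `λ ≤ d σ`. These first hits
form a prefix-free set whose cylinders cover the event, and a cylinder of length `n` has measure
at most `2⁻ⁿ`. Splitting on the first bit, the (super)martingale property gives the Kraft-type
inequality `∑_{σ ∈ F} d σ 2^{-|σ|} ≤ d []` for every prefix-free `F`, whence
`λ ∑_{σ first hit} 2^{-|σ|} ≤ d []`.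
-/

open MeasureTheory
open scoped ENNReal

/-- The fair-coin product measure `μ^∞` on infinite binary sequences (pushforward of
Lebesgue measure on `[0,1)` under binary digit extraction). -/
noncomputable def muInf : Measure (ℕ → Bool) :=
  Measure.map (fun (t : ℝ) (n : ℕ) => decide (⌊t * 2 ^ (n + 1)⌋ % 2 = 1))
    (volume.restrict (Set.Ico (0 : ℝ) 1))

/-- The initial segment `x|_N` (first `N` bits) of an infinite binary sequence. -/
def initSeg (x : ℕ → Bool) (N : ℕ) : List Bool := (List.range N).map x

lemma length_initSeg (x : ℕ → Bool) (N : ℕ) : (initSeg x N).length = N := by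
  simp [initSeg]

lemma initSeg_succ (x : ℕ → Bool) (N : ℕ) : initSeg x (N + 1) = initSeg x N ++ [x N] := by
  simp [initSeg, List.range_succ]

lemma take_initSeg (x : ℕ → Bool) {k N : ℕ} (h : k ≤ N) :
    (initSeg x N).take k = initSeg x k := by
  simp [initSeg, ← List.map_take, List.take_range, h]

def prefixCylinder (σ : List Bool) : Set (ℕ → Bool) := {x | initSeg x σ.length = σ}

lemma prefixCylinder_eq_iInter (σ : List Bool) :
    prefixCylinder σ = ⋂ i : Fin σ.length, {x | x i = σ[i]} := by
  ext x
  simp only [prefixCylinder, initSeg, List.ext_getElem_iff, List.length_map, List.length_range,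
    List.getElem_map, List.getElem_range, Subsingleton.forall₂_iff, true_and, Set.mem_ofPred_eq,
    Fin.getElem_fin, Set.mem_iInter]
  exact ⟨fun h i => h i i.2, fun h i hi => h ⟨i, hi⟩⟩

lemma measurableSet_prefixCylinder (σ : List Bool) : MeasurableSet (prefixCylinder σ) := by
  rw [prefixCylinder_eq_iInter]
  exact MeasurableSet.iInter fun i => measurable_pi_apply _ (measurableSet_singleton _)

noncomputable def binaryDigits (t : ℝ) (n : ℕ) : Bool := decide (⌊t * 2 ^ (n + 1)⌋ % 2 = 1)

lemma muInf_eq_map : muInf = (volume.restrict (Set.Ico (0 : ℝ) 1)).map binaryDigits := rfl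

lemma measurable_binaryDigits : Measurable binaryDigits :=
  measurable_pi_lambda _ fun _ =>
    (measurable_from_top (f := fun k : ℤ => decide (k % 2 = 1))).comp
      (Int.measurable_floor.comp (measurable_id.mul_const _))

lemma floor_mul_two_pow_succ (t : ℝ) (n : ℕ) :
    ⌊t * 2 ^ (n + 1)⌋ = 2 * ⌊t * 2 ^ n⌋ + ⌊t * 2 ^ (n + 1)⌋ % 2 := by
  have : ⌊t * 2 ^ n⌋ = ⌊t * 2 ^ (n + 1)⌋ / 2 := by
    rw [← Nat.cast_ofNat (R := ℤ), ← Int.floor_div_natCast, pow_succ, ← mul_assoc, Nat.cast_ofNat,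
      mul_div_cancel_right₀ _ two_ne_zero]
  omega

lemma floor_mul_two_pow_eq_of_initSeg_eq {t t' : ℝ} (ht : t ∈ Set.Ico (0 : ℝ) 1)
    (ht' : t' ∈ Set.Ico (0 : ℝ) 1) {n : ℕ}
    (h : initSeg (binaryDigits t) n = initSeg (binaryDigits t') n) :
    ⌊t * 2 ^ n⌋ = ⌊t' * 2 ^ n⌋ := by
  induction n with
  | zero => simp [Int.floor_eq_zero_iff.2 ht, Int.floor_eq_zero_iff.2 ht']
  | succ n ih =>
    rw [initSeg_succ, initSeg_succ] at h
    obtain ⟨hseg, hdigit⟩ := List.append_inj' h rfl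
    simp only [binaryDigits, List.cons.injEq, decide_eq_decide, and_true] at hdigit
    rw [floor_mul_two_pow_succ t, floor_mul_two_pow_succ t', ih hseg]
    omega

lemma muInf_prefixCylinder_le (σ : List Bool) : muInf (prefixCylinder σ) ≤ 2⁻¹ ^ σ.length := by
  rw [muInf_eq_map, Measure.map_apply measurable_binaryDigits (measurableSet_prefixCylinder σ),
    Measure.restrict_apply' measurableSet_Ico]
  set s := binaryDigits ⁻¹' prefixCylinder σ ∩ Set.Ico 0 1
  obtain hs | ⟨t₀, ht₀σ, ht₀⟩ := s.eq_empty_or_nonempty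
  · simp [hs]
  set n := σ.length
  set m := ⌊t₀ * 2 ^ n⌋
  have hsub : s ⊆ Set.Ico (m / 2 ^ n) ((m + 1) / 2 ^ n) := by
    rintro t ⟨htσ, ht⟩
    have hm : ⌊t * 2 ^ n⌋ = m := floor_mul_two_pow_eq_of_initSeg_eq ht ht₀ (htσ.trans ht₀σ.symm)
    rw [Set.mem_Ico, div_le_iff₀ (by positivity), lt_div_iff₀ (by positivity), ← hm]
    exact ⟨Int.floor_le _, Int.lt_floor_add_one _⟩
  calc volume s ≤ volume (Set.Ico ((m : ℝ) / 2 ^ n) ((m + 1) / 2 ^ n)) := measure_mono hsub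
    _ = 2⁻¹ ^ n := by
      rw [Real.volume_Ico, ← sub_div, add_sub_cancel_left, one_div, ← inv_pow,
        ENNReal.ofReal_pow (by norm_num), ENNReal.ofReal_inv_of_pos two_pos, ENNReal.ofReal_ofNat]

def firstHits {α : Type*} (p : List α → Prop) : Set (List α) :=
  {σ | p σ ∧ ∀ k < σ.length, ¬ p (σ.take k)}

lemma isAntichain_firstHits {α : Type*} (p : List α → Prop) :
    IsAntichain List.IsPrefix (firstHits p) := by
  intro σ hσ τ hτ hne hpre
  have hlt : σ.length < τ.length :=
    lt_of_le_of_ne hpre.length_le fun h => hne (hpre.eq_of_length h)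
  exact hτ.2 _ hlt (List.prefix_iff_eq_take.1 hpre ▸ hσ.1)

lemma setOf_exists_initSeg_subset (p : List Bool → Prop) :
    {x | ∃ N, p (initSeg x N)} ⊆ ⋃ σ ∈ firstHits p, prefixCylinder σ := by
  classical
  rintro x hx
  refine Set.mem_biUnion (x := initSeg x (Nat.find hx)) ⟨Nat.find_spec hx, fun k hk => ?_⟩ ?_
  · rw [length_initSeg] at hk
    rw [take_initSeg x hk.le]
    exact Nat.find_min hx hk
  · simp [prefixCylinder, length_initSeg]

lemma sum_eq_sum_preimage_cons_add {M : Type*} [AddCommMonoid M] {F : Finset (List Bool)}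
    (hF : [] ∉ F) (g : List Bool → M) :
    ∑ σ ∈ F, g σ = ∑ τ ∈ F.preimage (List.cons false) List.cons_injective.injOn, g (false :: τ)
      + ∑ τ ∈ F.preimage (List.cons true) List.cons_injective.injOn, g (true :: τ) := by
  classical
  rw [Finset.sum_preimage', Finset.sum_preimage', ← Finset.sum_filter_add_sum_filter_not F
    (· ∈ Set.range (List.cons false))]
  congr 1
  refine Finset.sum_congr (Finset.filter_congr fun σ hσ => ?_) fun _ _ => rfl
  rcases σ with _ | ⟨_ | _, τ⟩ <;> simp_all

lemma sum_mul_inv_two_pow_length_le_of_length_le {d : List Bool → ℝ≥0∞}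
    (hd : ∀ σ, d (σ ++ [false]) + d (σ ++ [true]) ≤ 2 * d σ) {F : Finset (List Bool)}
    (hF : IsAntichain List.IsPrefix (F : Set (List Bool))) {n : ℕ} (hn : ∀ σ ∈ F, σ.length ≤ n) :
    ∑ σ ∈ F, d σ * 2⁻¹ ^ σ.length ≤ d [] := by
  induction n generalizing d F with
  | zero =>
    have : F ⊆ {[]} := fun σ hσ => by simpa using hn σ hσ
    calc ∑ σ ∈ F, d σ * 2⁻¹ ^ σ.length ≤ ∑ σ ∈ {[]}, d σ * 2⁻¹ ^ σ.length :=
          Finset.sum_le_sum_of_subset this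
      _ = d [] := by simp
  | succ n ih =>
    by_cases hnil : [] ∈ F
    · have : F = {[]} := Finset.eq_singleton_iff_unique_mem.2
        ⟨hnil, fun τ hτ => by_contra fun hne => hF hnil hτ (Ne.symm hne) τ.nil_prefix⟩
      simp [this]
    have hchild (b : Bool) :
        ∑ τ ∈ F.preimage (List.cons b) List.cons_injective.injOn,
            d (b :: τ) * 2⁻¹ ^ (b :: τ).length ≤ 2⁻¹ * d [b] := by
      simp only [List.length_cons, pow_succ, ← mul_assoc, ← Finset.sum_mul]
      rw [mul_comm]
      gcongr
      refine ih (d := fun τ => d (b :: τ)) (fun τ => hd (b :: τ)) ?_ ?_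
      · intro σ hσ τ hτ hne hpre
        exact hF (Finset.mem_preimage.1 hσ) (Finset.mem_preimage.1 hτ) (by simpa using hne)
          (List.cons_prefix_cons.2 ⟨rfl, hpre⟩)
      · intro τ hτ
        simpa using hn _ (Finset.mem_preimage.1 hτ)
    calc ∑ σ ∈ F, d σ * 2⁻¹ ^ σ.length ≤ 2⁻¹ * d [false] + 2⁻¹ * d [true] := by
          rw [sum_eq_sum_preimage_cons_add hnil]
          exact add_le_add (hchild false) (hchild true)
      _ ≤ 2⁻¹ * (2 * d []) := by rw [← mul_add]; gcongr; exact hd []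
      _ = d [] := by
        rw [← mul_assoc, ENNReal.inv_mul_cancel two_ne_zero ENNReal.ofNat_ne_top, one_mul]

lemma tsum_mul_inv_two_pow_length_le {d : List Bool → ℝ≥0∞}
    (hd : ∀ σ, d (σ ++ [false]) + d (σ ++ [true]) ≤ 2 * d σ) {S : Set (List Bool)}
    (hS : IsAntichain List.IsPrefix S) :
    ∑' σ : S, d σ * 2⁻¹ ^ (σ : List Bool).length ≤ d [] := by
  refine ENNReal.summable.tsum_le_of_sum_le fun G => ?_
  calc ∑ σ ∈ G, d σ * 2⁻¹ ^ (σ : List Bool).length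
      = ∑ σ ∈ G.image Subtype.val, d σ * 2⁻¹ ^ σ.length := by
        rw [Finset.sum_image fun _ _ _ _ => Subtype.ext]
    _ ≤ d [] := sum_mul_inv_two_pow_length_le_of_length_le hd
        (hS.subset (by rw [Finset.coe_image]; exact Subtype.coe_image_subset _ _)) fun _ => Finset.le_sup

lemma tsum_inv_two_pow_length_firstHits_le {d : List Bool → ℝ≥0∞}
    (hd : ∀ σ, d (σ ++ [false]) + d (σ ++ [true]) ≤ 2 * d σ) {c : ℝ≥0∞} (hc₀ : c ≠ 0)
    (hc : c ≠ ∞) :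
    ∑' σ : firstHits (c ≤ d ·), (2⁻¹ : ℝ≥0∞) ^ (σ : List Bool).length ≤ d [] / c := by
  rw [ENNReal.le_div_iff_mul_le (Or.inl hc₀) (Or.inl hc), mul_comm, ← ENNReal.tsum_mul_left]
  calc ∑' σ : firstHits (c ≤ d ·), c * 2⁻¹ ^ (σ : List Bool).length
      ≤ ∑' σ : firstHits (c ≤ d ·), d σ * 2⁻¹ ^ (σ : List Bool).length :=
        ENNReal.tsum_le_tsum fun σ => mul_le_mul_left σ.2.1 _
    _ ≤ d [] := tsum_mul_inv_two_pow_length_le hd (isAntichain_firstHits _)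

/-- Ville/Doob maximal inequality: if `d : List Bool → ℝ≥0` satisfies
`d(σ0) + d(σ1) = 2·d(σ)`, then for every `λ > 0` the `μ^∞`-measure of the set of
sequences `x` with `d(x|_N) ≥ λ` for some `N` is at most `d([])/λ`. -/
theorem ville_doob_maximal_inequality (d : List Bool → NNReal)
    (hmart : ∀ σ : List Bool, d (σ ++ [false]) + d (σ ++ [true]) = 2 * d σ)
    (lam : NNReal) (hlam : 0 < lam) :
    muInf {x : ℕ → Bool | ∃ N : ℕ, lam ≤ d (initSeg x N)}
      ≤ (d [] : ENNReal) / lam := by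
  set D : List Bool → ℝ≥0∞ := fun σ => d σ
  have hD : ∀ σ, D (σ ++ [false]) + D (σ ++ [true]) ≤ 2 * D σ := fun σ => by
    simp only [D]
    exact_mod_cast (hmart σ).le
  have hcover : {x : ℕ → Bool | ∃ N : ℕ, lam ≤ d (initSeg x N)}
      ⊆ ⋃ σ ∈ firstHits ((lam : ℝ≥0∞) ≤ D ·), prefixCylinder σ := by
    simpa [D] using setOf_exists_initSeg_subset ((lam : ℝ≥0∞) ≤ D ·)
  calc muInf {x : ℕ → Bool | ∃ N : ℕ, lam ≤ d (initSeg x N)}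
      ≤ ∑' σ : firstHits ((lam : ℝ≥0∞) ≤ D ·), muInf (prefixCylinder σ) :=
        (measure_mono hcover).trans (measure_biUnion_le _ (Set.to_countable _) _)
    _ ≤ ∑' σ : firstHits ((lam : ℝ≥0∞) ≤ D ·), 2⁻¹ ^ (σ : List Bool).length :=
        ENNReal.tsum_le_tsum fun σ => muInf_prefixCylinder_le σ
    _ ≤ D [] / lam :=
        tsum_inv_two_pow_length_firstHits_le hD (ENNReal.coe_ne_zero.2 hlam.ne') ENNReal.coe_ne_top
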